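/- (LU factorization of a shifted companion matrix) Let C be the n×n companion matrix of P(x) = x^n + m_{n-1}x^{n-1} + ⋯ + m_0, σ a scalar, and H_k(σ) the Horner values H_0(σ)=1, H_k(σ) = σ·H_{k-1}(σ) + m_{n-k}. Assume H_k(σ) ≠ 0 for k = 0,…,n-1. Define L as unit lower bidiagonal with subdiagonal entries L(k+1,k) = -H_{k-1}(σ)/H_k(σ), and U as upper triangular with U(k,k) = -H_k(σ)/H_{k-1}(σ) for k < n, U(n,n) = -P(σ)/H_{n-1}(σ), and U(k,j) = -m_{n-j}/H_{k-1}(σ) for k < j ≤ n. Then L U = C - σ I. -/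

import Mathlib

/-!
Row `0` of `L` is `e₀`, so row `0` of `L U` is row `0` of `U`, which is the first row of
`C - σ I` because `H₁ = σ + m_{n-1}`. Row `k+1` of `L U` is `U_{k+1} - (H_k / H_{k+1}) U_k`.
Right of the diagonal both rows carry the same numerators `-m_{n-1-j}` over `H_{k+1}` and `H_k`,
so these cancel; at column `k` the factors `H_k, H_{k+1}` cancel to give `1`; and at the
diagonal the Horner step `H_{k+2} = σ H_{k+1} + m_{n-k-2}` leaves exactly `-σ`.
-/

open Matrix

section UnitLowerBidiagonal

variable {R : Type*} [Semiring R] {n : ℕ}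

def unitLowerBidiagonal (ℓ : ℕ → R) : Matrix (Fin n) (Fin n) R :=
  of fun i j => if i = j then 1 else if i.1 = j.1 + 1 then ℓ j.1 else 0

theorem unitLowerBidiagonal_mul_apply_of_val_eq_zero (ℓ : ℕ → R) (U : Matrix (Fin n) (Fin n) R)
    {i : Fin n} (hi : i.1 = 0) (j : Fin n) :
    (unitLowerBidiagonal ℓ * U : Matrix (Fin n) (Fin n) R) i j = U i j := by
  rw [mul_apply, Fintype.sum_eq_single i]
  · simp [unitLowerBidiagonal]
  · intro k hk
    simp [unitLowerBidiagonal, Ne.symm hk, hi]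

theorem unitLowerBidiagonal_mul_apply_of_val_eq_succ (ℓ : ℕ → R) (U : Matrix (Fin n) (Fin n) R)
    {i k : Fin n} (hik : i.1 = k.1 + 1) (j : Fin n) :
    (unitLowerBidiagonal ℓ * U : Matrix (Fin n) (Fin n) R) i j = U i j + ℓ k.1 * U k j := by
  have hki : i ≠ k := fun h => by simp [h] at hik
  rw [mul_apply, Fintype.sum_eq_add i k hki]
  · simp [unitLowerBidiagonal, hik, hki]
  · rintro l ⟨hli, hlk⟩
    have : i.1 ≠ l.1 + 1 := fun h => hlk (Fin.ext (by omega))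
    simp [unitLowerBidiagonal, Ne.symm hli, this]

end UnitLowerBidiagonal

section HornerUpper

variable {F : Type*} [Field F] {n : ℕ} (m H : ℕ → F) (σ : F)

def hornerUpper : Matrix (Fin n) (Fin n) F :=
  of fun i j => if i = j then -H (i.1 + 1) / H i.1
    else if i.1 < j.1 then -m (n - 1 - j.1) / H i.1 else 0

variable {m H σ}

theorem hornerUpper_apply_of_val_eq_zero (hH0 : H 0 = 1) (hH1 : H 1 = σ + m (n - 1))
    {i : Fin n} (hi : i.1 = 0) (j : Fin n) :
    hornerUpper m H i j = -m (n - 1 - j.1) - σ * (1 : Matrix (Fin n) (Fin n) F) i j := by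
  obtain ⟨i, hi'⟩ := i
  obtain rfl : i = 0 := hi
  obtain ⟨_ | j, hj⟩ := j
  · simp only [hornerUpper, of_apply, one_apply, ↓reduceIte, zero_add, hH0, hH1, div_one,
      tsub_zero, mul_one]
    ring
  · simp [hornerUpper, one_apply, hH0]

theorem hornerUpper_apply_add_of_val_eq_succ {i k : Fin n} (hik : i.1 = k.1 + 1)
    (hHk : H k.1 ≠ 0) (hHi : H i.1 ≠ 0) (horner : H (i.1 + 1) = σ * H i.1 + m (n - 1 - i.1))
    (j : Fin n) :
    hornerUpper m H i j + -H k.1 / H i.1 * hornerUpper m H k j =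
      (if i.1 = j.1 + 1 then 1 else 0) - σ * (1 : Matrix (Fin n) (Fin n) F) i j := by
  obtain ⟨i, hi'⟩ := i
  obtain ⟨k, hk'⟩ := k
  obtain ⟨j, hj⟩ := j
  simp only at hik hHk hHi horner
  subst hik
  simp only [hornerUpper, one_apply, of_apply, Fin.mk.injEq]
  obtain hjk | rfl | rfl | hjk : j < k ∨ j = k ∨ j = k + 1 ∨ k + 1 < j := by omega
  · simp [hjk.ne', (hjk.trans k.lt_succ_self).ne', hjk.not_gt, (hjk.trans k.lt_succ_self).not_gt]
  · simp only [Nat.add_eq_left, one_ne_zero, ↓reduceIte, add_lt_iff_neg_left, not_lt_zero,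
      zero_add, mul_zero, sub_zero]
    field_simp
  · simp only [↓reduceIte, horner, Nat.left_eq_add, one_ne_zero,
      lt_add_iff_pos_right, Order.lt_one_iff, mul_one, zero_sub]
    field_simp
    ring
  · simp only [hjk.ne, (k.lt_succ_self.trans hjk).ne, hjk, k.lt_succ_self.trans hjk, ↓reduceIte,
      Nat.add_right_cancel_iff, mul_zero, sub_self]
    field_simp
    ring

end HornerUpper

/-- LU factorization of a shifted companion matrix in terms of Horner values:
with `H_0(σ)=1`, `H_k(σ)=σH_{k-1}(σ)+m_{n-k}` all nonzero for `k < n`, the stated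
bidiagonal `L` and quasiseparable upper-triangular `U` satisfy `L U = C - σ I`.
(0-based indexing throughout; `H (j+1)` plays the role of 1-based `H_{k}` at row `k = j+1`,
and `H n = P(σ)`.) -/
theorem companion_shifted_LU {F : Type*} [Field F] {n : ℕ} (m : ℕ → F) (σ : F)
    (H : ℕ → F)
    (hH0 : H 0 = 1)
    (hHrec : ∀ k, k < n → H (k + 1) = σ * H k + m (n - (k + 1)))
    (hHne : ∀ k, k < n → H k ≠ 0) :
    let C : Matrix (Fin n) (Fin n) F :=
      Matrix.of fun i j =>
        if i.1 = 0 then -m (n - 1 - j.1) else if i.1 = j.1 + 1 then 1 else 0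
    let L : Matrix (Fin n) (Fin n) F :=
      Matrix.of fun i j =>
        if i = j then 1 else if i.1 = j.1 + 1 then -H j.1 / H (j.1 + 1) else 0
    let U : Matrix (Fin n) (Fin n) F :=
      Matrix.of fun i j =>
        if i = j then -H (i.1 + 1) / H i.1
        else if i.1 < j.1 then -m (n - 1 - j.1) / H i.1 else 0
    L * U = C - σ • (1 : Matrix (Fin n) (Fin n) F) := by
  intro C L U
  change unitLowerBidiagonal (fun j => -H j / H (j + 1)) * hornerUpper m H = _
  ext i j
  rw [Matrix.sub_apply, Matrix.smul_apply, smul_eq_mul]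
  obtain ⟨_ | k, hi⟩ := i
  · rw [unitLowerBidiagonal_mul_apply_of_val_eq_zero _ _ rfl,
      hornerUpper_apply_of_val_eq_zero hH0 (by simpa [hH0] using hHrec 0 hi) rfl]
    simp [C]
  · rw [unitLowerBidiagonal_mul_apply_of_val_eq_succ _ _ (k := ⟨k, Nat.lt_of_succ_lt hi⟩) rfl,
      hornerUpper_apply_add_of_val_eq_succ rfl (hHne k (Nat.lt_of_succ_lt hi)) (hHne (k + 1) hi)
        (by rw [hHrec (k + 1) hi, Nat.sub_sub, Nat.add_comm 1])]
    simp [C]
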